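/- Let Γ be a regular backward inhomogeneous Y-semigroup with generator A, let (s,t) ∈ Δ_J, and assume: for every u ∈ J, A(u) restricted to Y₁ is a bounded operator from Y₁ to Y with u ↦ ‖A(u)‖_{B(Y₁,Y)} integrable on [s,t]; A is Y₁-strongly continuous (for each f ∈ Y₁, u ↦ A(u)f is continuous in the Y-norm); and for f as below the maps u ↦ Γ(s,u)A(u)²f and u ↦ ∫_s^u Γ(s,r)A(r)A'(u)f dr are Bochner integrable on [s,t]. Then for every f ∈ D(A') := {f ∈ D(A) ∩ Y₁ : A(u)f ∈ Y₁ for all u ∈ J, and for all u ∈ J the limit A'(u)f := Y₁-lim_{h→0} (A(u+h)f − A(u)f)/h exists in Y₁}, one has the second-order Taylor formula Γ(s,t)f = f + ∫_s^t A(u)f du + ∫_s^t (t−u) Γ(s,u)A(u)²f du + ∫_s^t (t−u) ∫_s^u Γ(s,r)A(r)A'(u)f dr du (Bochner integrals in Y). -/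

import Mathlib

/-!
The forward equation `∂ᵤ Γ(s,u)g = Γ(s,u)A(u)g` integrates to
`Γ(s,u)g = g + ∫ₛᵘ Γ(s,r)A(r)g dr` for `g ∈ Y₁`. For `g = f` this is the first-order formula.
Since `A(u)f ∈ Y₁`, its integrand `Γ(s,u)A(u)f` differs from `A(u)f` by
`K(u) = Γ(s,u)A(u)f − A(u)f`, which vanishes at `u = s`, so `∫ₛᵗ K = ∫ₛᵗ (t − u) K'(u) du`.
The product rule gives `K'(u) = Γ(s,u)A(u)²f + Γ(s,u)A'(u)f − A'(u)f`, and the first-order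
formula for `g = A'(u)f` turns the last two terms into `∫ₛᵘ Γ(s,r)A(r)A'(u)f dr`. That product
rule holds because `u ↦ Γ(s,u)` is uniformly bounded on `[s,t]` as a family of operators
`Y₁ → Y` (Banach–Steinhaus), while being only strongly differentiable.
-/

open Filter Topology Set MeasureTheory

section Slope

variable {E : Type*} [NormedAddCommGroup E] [NormedSpace ℝ E] {f : ℝ → E} {f' : E} {S : Set ℝ}
  {x : ℝ}

theorem hasDerivWithinAt_iff_tendsto_slope_zero :
    HasDerivWithinAt f f' S x ↔
      Tendsto (fun h : ℝ => h⁻¹ • (f (x + h) - f x)) (𝓝[{h | h ≠ 0 ∧ x + h ∈ S}] 0) (𝓝 f') := by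
  have : 𝓝[S \ {x}] x = map (x + ·) (𝓝[{h | h ≠ 0 ∧ x + h ∈ S}] 0) := by
    rw [show (x + ·) = ⇑(Homeomorph.addLeft x) from rfl,
      (Homeomorph.addLeft x).isEmbedding.map_nhdsWithin_eq]
    simp only [Homeomorph.coe_addLeft, add_zero, image_add_left]
    congr 1
    ext y
    simp [neg_add_eq_zero, eq_comm, and_comm]
  simp [hasDerivWithinAt_iff_tendsto_slope, this, slope, Function.comp_def]

end Slope

section StrongDerivative

variable {𝕜 : Type*} [NontriviallyNormedField 𝕜] {E F : Type*} [NormedAddCommGroup E]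
  [NormedSpace 𝕜 E] [NormedAddCommGroup F] [NormedSpace 𝕜 F]

theorem IsCompact.exists_bound_of_continuousOn_apply {X : Type*} [TopologicalSpace X]
    [CompleteSpace E] {K : Set X} (hK : IsCompact K) {T : X → E →L[𝕜] F}
    (hT : ∀ g, ContinuousOn (fun x => T x g) K) : ∃ C, ∀ x ∈ K, ‖T x‖ ≤ C := by
  have hpt : ∀ g, ∃ C, ∀ x : K, ‖T x g‖ ≤ C := fun g =>
    let ⟨C, hC⟩ := hK.exists_bound_of_continuousOn (hT g)
    ⟨C, fun x => hC x x.2⟩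
  obtain ⟨C, hC⟩ := banach_steinhaus hpt
  exact ⟨C, fun x hx => hC ⟨x, hx⟩⟩

theorem Filter.Tendsto.clm_apply_of_eventually_norm_le {α : Type*} {l : Filter α}
    {T : α → E →L[𝕜] F} {y : α → E} {y₀ : E} {z : F} {M : ℝ}
    (hT : Tendsto (fun a => T a y₀) l (𝓝 z)) (hM : ∀ᶠ a in l, ‖T a‖ ≤ M)
    (hy : Tendsto y l (𝓝 y₀)) : Tendsto (fun a => T a (y a)) l (𝓝 z) := by
  have hsmall : Tendsto (fun a => T a (y a - y₀)) l (𝓝 0) := by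
    refine squeeze_zero_norm' ?_
      (by simpa using (tendsto_iff_norm_sub_tendsto_zero.1 hy).const_mul M)
    filter_upwards [hM] with a ha
    exact (T a).le_of_opNorm_le ha _
  simpa using hsmall.add hT

theorem HasDerivWithinAt.clm_apply_of_eventually_norm_le {T : 𝕜 → E →L[𝕜] F} {v : 𝕜 → E}
    {v' : E} {a : F} {S : Set 𝕜} {x : 𝕜} {M : ℝ}
    (hT : HasDerivWithinAt (fun u => T u (v x)) a S x)
    (hTc : ContinuousWithinAt (fun u => T u v') S x) (hM : ∀ᶠ u in 𝓝[S] x, ‖T u‖ ≤ M)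
    (hv : HasDerivWithinAt v v' S x) :
    HasDerivWithinAt (fun u => T u (v u)) (a + T x v') S x := by
  have hincr : HasDerivWithinAt (fun u => T u (v u - v x)) (T x v') S x := by
    rw [hasDerivWithinAt_iff_tendsto_slope] at hv ⊢
    refine ((hTc.mono sdiff_subset).tendsto.clm_apply_of_eventually_norm_le
      (hM.filter_mono (nhdsWithin_mono _ sdiff_subset)) hv).congr fun u => ?_
    simp [slope_def_module]
  convert hT.add hincr using 1
  ext u
  simp

theorem IsCompact.hasDerivWithinAt_clm_apply [CompleteSpace E] {K : Set 𝕜} (hK : IsCompact K)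
    {T : 𝕜 → E →L[𝕜] F} {T' : 𝕜 → E → F}
    (hT : ∀ x ∈ K, ∀ g, HasDerivWithinAt (fun u => T u g) (T' x g) K x) {v : 𝕜 → E} {v' : E}
    {x : 𝕜} (hx : x ∈ K) (hv : HasDerivWithinAt v v' K x) :
    HasDerivWithinAt (fun u => T u (v u)) (T' x (v x) + T x v') K x := by
  obtain ⟨M, hM⟩ := hK.exists_bound_of_continuousOn_apply (T := T)
    fun g u hu => (hT u hu g).continuousWithinAt
  exact (hT x hx (v x)).clm_apply_of_eventually_norm_le (hT x hx v').continuousWithinAt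
    (eventually_nhdsWithin_of_forall hM) hv

end StrongDerivative

section Integral

variable {E : Type*} [NormedAddCommGroup E] [NormedSpace ℝ E] [CompleteSpace E] {a b : ℝ}
  {f f' : ℝ → E}

theorem integral_eq_sub_of_hasDerivWithinAt_Icc (hab : a ≤ b)
    (hf : ∀ x ∈ Icc a b, HasDerivWithinAt f (f' x) (Icc a b) x) (hf' : IntegrableOn f' (Icc a b)) :
    ∫ x in a..b, f' x = f b - f a :=
  intervalIntegral.integral_eq_sub_of_hasDerivAt_of_le hab
    (fun x hx => (hf x hx).continuousWithinAt)
    (fun x hx => (hf x (Ioo_subset_Icc_self hx)).hasDerivAt (Icc_mem_nhds hx.1 hx.2))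
    ((intervalIntegrable_iff_integrableOn_Icc_of_le hab).2 hf')

theorem integral_eq_integral_sub_smul_deriv (hab : a ≤ b)
    (hf : ∀ x ∈ Icc a b, HasDerivWithinAt f (f' x) (Icc a b) x) (hfa : f a = 0)
    (hf' : IntegrableOn f' (Icc a b)) :
    ∫ x in a..b, f x = ∫ x in a..b, (b - x) • f' x := by
  have hlin : ∀ x ∈ uIcc a b, HasDerivWithinAt (fun x => b - x) (-1) (uIcc a b) x := fun x _ =>
    ((hasDerivAt_id x).const_sub b).hasDerivWithinAt
  rw [← uIcc_of_le hab] at hf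
  rw [intervalIntegral.integral_smul_deriv_eq_deriv_smul_of_hasDerivWithinAt hlin hf
    intervalIntegrable_const ((intervalIntegrable_iff_integrableOn_Icc_of_le hab).2 hf')]
  simp [hfa]

end Integral

section Orbit

/- `Γ u` stands for the propagator `Γ(s, u)` with the initial time `s` fixed. -/
variable {Y Y₁ : Type*} [NormedAddCommGroup Y] [NormedSpace ℝ Y] [CompleteSpace Y]
  [NormedAddCommGroup Y₁] [NormedSpace ℝ Y₁] {ι : Y₁ →L[ℝ] Y} {Γ : ℝ → Y →L[ℝ] Y}
  {A : ℝ → Y₁ →L[ℝ] Y} {s t : ℝ}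

theorem orbit_eq_add_integral
    (hΓ : ∀ u ∈ Icc s t, ∀ g, HasDerivWithinAt (fun r => Γ r (ι g)) (Γ u (A u g)) (Icc s t) u)
    (hΓs : Γ s = ContinuousLinearMap.id ℝ Y)
    (hint : ∀ u ∈ Icc s t, ∀ g, IntegrableOn (fun r => Γ r (A r g)) (Icc s u))
    {u : ℝ} (hu : u ∈ Icc s t) (g : Y₁) : Γ u (ι g) = ι g + ∫ r in s..u, Γ r (A r g) := by
  have hsub : Icc s u ⊆ Icc s t := Icc_subset_Icc_right hu.2
  rw [integral_eq_sub_of_hasDerivWithinAt_Icc hu.1 (fun r hr => (hΓ r (hsub hr) g).mono hsub)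
    (hint u hu g), hΓs]
  simp

theorem hasDerivWithinAt_orbit_sub [CompleteSpace Y₁]
    (hΓ : ∀ u ∈ Icc s t, ∀ g, HasDerivWithinAt (fun r => Γ r (ι g)) (Γ u (A u g)) (Icc s t) u)
    (hΓs : Γ s = ContinuousLinearMap.id ℝ Y)
    (hint : ∀ u ∈ Icc s t, ∀ g, IntegrableOn (fun r => Γ r (A r g)) (Icc s u))
    {v v' : ℝ → Y₁} (hv : ∀ u ∈ Icc s t, HasDerivWithinAt v (v' u) (Icc s t) u)
    {u : ℝ} (hu : u ∈ Icc s t) :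
    HasDerivWithinAt (fun u => Γ u (ι (v u)) - ι (v u))
      (Γ u (A u (v u)) + ∫ r in s..u, Γ r (A r (v' u))) (Icc s t) u := by
  refine ((isCompact_Icc.hasDerivWithinAt_clm_apply (T := fun u => (Γ u).comp ι) hΓ hu
    (hv u hu)).sub (ι.hasFDerivAt.comp_hasDerivWithinAt u (hv u hu))).congr_deriv ?_
  rw [ContinuousLinearMap.comp_apply, orbit_eq_add_integral hΓ hΓs hint hu]
  abel

theorem orbit_eq_taylor_two [CompleteSpace Y₁] (hst : s ≤ t)
    (hΓ : ∀ u ∈ Icc s t, ∀ g, HasDerivWithinAt (fun r => Γ r (ι g)) (Γ u (A u g)) (Icc s t) u)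
    (hΓs : Γ s = ContinuousLinearMap.id ℝ Y)
    (hint : ∀ u ∈ Icc s t, ∀ g, IntegrableOn (fun r => Γ r (A r g)) (Icc s u))
    {v v' : ℝ → Y₁} (hv : ∀ u ∈ Icc s t, HasDerivWithinAt v (v' u) (Icc s t) u)
    {f : Y₁} (hfv : ∀ u ∈ Icc s t, ι (v u) = A u f)
    (hint₂ : IntegrableOn (fun u => Γ u (A u (v u))) (Icc s t))
    (hint₃ : IntegrableOn (fun u => ∫ r in s..u, Γ r (A r (v' u))) (Icc s t)) :
    Γ t (ι f) = ι f + (∫ u in s..t, A u f) + (∫ u in s..t, (t - u) • Γ u (A u (v u))) +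
      ∫ u in s..t, (t - u) • ∫ r in s..u, Γ r (A r (v' u)) := by
  set K : ℝ → Y := fun u => Γ u (ι (v u)) - ι (v u)
  have hK : ∀ u ∈ Icc s t,
      HasDerivWithinAt K (Γ u (A u (v u)) + ∫ r in s..u, Γ r (A r (v' u))) (Icc s t) u :=
    fun u hu => hasDerivWithinAt_orbit_sub hΓ hΓs hint hv hu
  have hKint : IntervalIntegrable K volume s t :=
    ContinuousOn.intervalIntegrable_of_Icc hst fun u hu => (hK u hu).continuousWithinAt
  have hAint : ∫ u in s..t, A u f = (∫ u in s..t, Γ u (A u f)) - ∫ u in s..t, K u := by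
    rw [← intervalIntegral.integral_sub
      ((intervalIntegrable_iff_integrableOn_Icc_of_le hst).2 (hint t ⟨hst, le_rfl⟩ f)) hKint]
    refine intervalIntegral.integral_congr fun u hu => ?_
    rw [uIcc_of_le hst] at hu
    simp [K, hfv u hu]
  have hsmul : ∀ {g : ℝ → Y}, IntegrableOn g (Icc s t) →
      IntervalIntegrable (fun u => (t - u) • g u) volume s t := fun hg =>
    (intervalIntegrable_iff_integrableOn_Icc_of_le hst).2
      (hg.continuousOn_smul (by fun_prop) isCompact_Icc)
  calc Γ t (ι f) = ι f + ∫ u in s..t, Γ u (A u f) :=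
        orbit_eq_add_integral hΓ hΓs hint ⟨hst, le_rfl⟩ f
    _ = ι f + (∫ u in s..t, A u f) + ∫ u in s..t, K u := by rw [hAint]; abel
    _ = _ := by
      rw [integral_eq_integral_sub_smul_deriv hst hK (by simp [K, hΓs]) (hint₂.add hint₃),
        add_assoc (ι f + _), ← intervalIntegral.integral_add (hsmul hint₂) (hsmul hint₃)]
      simp only [smul_add, add_assoc]

end Orbit

theorem stmt_6_general
    {Y : Type*} [NormedAddCommGroup Y] [NormedSpace ℝ Y] [CompleteSpace Y]
    {Y₁ : Type*} [NormedAddCommGroup Y₁] [NormedSpace ℝ Y₁] [CompleteSpace Y₁]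
    (ι : Y₁ →L[ℝ] Y)
    (J : Set ℝ) (hJ : J = Set.Ici (0 : ℝ) ∨ ∃ T : ℝ, 0 < T ∧ J = Set.Icc 0 T)
    (Γ : ℝ → ℝ → Y →L[ℝ] Y)
    (hId : ∀ t ∈ J, Γ t t = ContinuousLinearMap.id ℝ Y)
    (A : ℝ → Y₁ →L[ℝ] Y)
    (htDeriv : ∀ s t : ℝ, s ∈ J → t ∈ J → s ≤ t → ∀ f : Y₁,
      HasDerivWithinAt (fun u => Γ s u (ι f)) (Γ s t (A t f)) {u ∈ J | s ≤ u} t)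
    (hIntReg : ∀ s t : ℝ, s ∈ J → t ∈ J → s ≤ t → ∀ f : Y₁,
      IntegrableOn (fun u => Γ s u (A u f)) (Set.Icc s t))
    (s t : ℝ) (hsJ : s ∈ J) (htJ : t ∈ J) (hst : s ≤ t)
    (f : Y₁) (Af : ℝ → Y₁) (hAf : ∀ u ∈ J, ι (Af u) = A u f)
    (A'f : ℝ → Y₁)
    (hA'f : ∀ u ∈ J, Tendsto (fun h : ℝ => h⁻¹ • (Af (u + h) - Af u))
      (𝓝[{h : ℝ | h ≠ 0 ∧ u + h ∈ J}] 0) (𝓝 (A'f u)))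
    (hInt2 : IntegrableOn (fun u => Γ s u (A u (Af u))) (Set.Icc s t))
    (hInt3 : IntegrableOn (fun u => ∫ r in s..u, Γ s r (A r (A'f u))) (Set.Icc s t)) :
    Γ s t (ι f) = ι f + (∫ u in s..t, A u f) +
      (∫ u in s..t, (t - u) • Γ s u (A u (Af u))) +
      ∫ u in s..t, (t - u) • ∫ r in s..u, Γ s r (A r (A'f u)) := by
  have hJst : Icc s t ⊆ J := by
    rcases hJ with rfl | ⟨T, -, rfl⟩ <;> exact Set.Icc_subset _ hsJ htJ
  exact orbit_eq_taylor_two hst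
    (fun u hu g => (htDeriv s u hsJ (hJst hu) hu.1 g).mono fun r hr => ⟨hJst hr, hr.1⟩)
    (hId s hsJ) (fun u hu g => hIntReg s u hsJ (hJst hu) hu.1 g)
    (fun u hu => (hasDerivWithinAt_iff_tendsto_slope_zero.2 (hA'f u (hJst hu))).mono hJst)
    (fun u hu => hAf u (hJst hu)) hInt2 hInt3

/-- Second-order Taylor formula for a regular backward inhomogeneous
`Y`-semigroup `Γ` with generator `A : ℝ → Y₁ →L[ℝ] Y` (bounded `Y₁ → Y` with integrable
operator norm on `[s,t]`), `A` being `Y₁`-strongly continuous.  For `f ∈ D(A')`, i.e.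
`f ∈ Y₁` with `A(u)f ∈ Y₁` for all `u ∈ J` (encoded by `Af`) and such that the `Y₁`-limit
`A'(u)f = Y₁-lim_{h→0} (A(u+h)f − A(u)f)/h` exists (encoded by `A'f` and `hA'f`), and under
the integrability assumptions `hInt2`, `hInt3`, one has
`Γ(s,t)f = f + ∫_s^t A(u)f du + ∫_s^t (t−u) Γ(s,u)A(u)²f du
  + ∫_s^t (t−u) ∫_s^u Γ(s,r)A(r)A'(u)f dr du`. -/
theorem stmt_6
    {Y : Type*} [NormedAddCommGroup Y] [NormedSpace ℝ Y] [CompleteSpace Y]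
    [TopologicalSpace.SeparableSpace Y]
    {Y₁ : Type*} [NormedAddCommGroup Y₁] [NormedSpace ℝ Y₁] [CompleteSpace Y₁]
    [TopologicalSpace.SeparableSpace Y₁]
    (ι : Y₁ →L[ℝ] Y) (hι : Function.Injective ι)
    (J : Set ℝ) (hJ : J = Set.Ici (0 : ℝ) ∨ ∃ T : ℝ, 0 < T ∧ J = Set.Icc 0 T)
    (Γ : ℝ → ℝ → Y →L[ℝ] Y)
    (hId : ∀ t ∈ J, Γ t t = ContinuousLinearMap.id ℝ Y)
    (hSemi : ∀ s r t : ℝ, s ∈ J → r ∈ J → t ∈ J → s ≤ r → r ≤ t →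
      ∀ f : Y, Γ s r (Γ r t f) = Γ s t f)
    (A : ℝ → Y₁ →L[ℝ] Y)
    (hGen : ∀ t ∈ J, ∀ f : Y₁,
      Tendsto (fun h : ℝ => h⁻¹ • (Γ t (t + h) (ι f) - ι f))
        (𝓝[{h : ℝ | 0 < h ∧ t + h ∈ J}] 0) (𝓝 (A t f)) ∧
      Tendsto (fun h : ℝ => h⁻¹ • (Γ (t - h) t (ι f) - ι f))
        (𝓝[{h : ℝ | 0 < h ∧ t - h ∈ J}] 0) (𝓝 (A t f)))
    (Γ₁ : ℝ → ℝ → Y₁ → Y₁)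
    (hΓ₁ : ∀ s t : ℝ, s ∈ J → t ∈ J → s ≤ t → ∀ f : Y₁, ι (Γ₁ s t f) = Γ s t (ι f))
    (hsDeriv : ∀ s t : ℝ, s ∈ J → t ∈ J → s ≤ t → ∀ f : Y₁,
      HasDerivWithinAt (fun u => Γ u t (ι f)) (-(A s (Γ₁ s t f))) {u ∈ J | u ≤ t} s)
    (htDeriv : ∀ s t : ℝ, s ∈ J → t ∈ J → s ≤ t → ∀ f : Y₁,
      HasDerivWithinAt (fun u => Γ s u (ι f)) (Γ s t (A t f)) {u ∈ J | s ≤ u} t)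
    (hIntReg : ∀ s t : ℝ, s ∈ J → t ∈ J → s ≤ t → ∀ f : Y₁,
      IntegrableOn (fun u => Γ s u (A u f)) (Set.Icc s t))
    (s t : ℝ) (hsJ : s ∈ J) (htJ : t ∈ J) (hst : s ≤ t)
    (hNormInt : IntegrableOn (fun u => ‖A u‖) (Set.Icc s t))
    (hAcont : ∀ g : Y₁, ContinuousOn (fun u => A u g) J)
    (f : Y₁) (Af : ℝ → Y₁) (hAf : ∀ u ∈ J, ι (Af u) = A u f)
    (A'f : ℝ → Y₁)
    (hA'f : ∀ u ∈ J, Tendsto (fun h : ℝ => h⁻¹ • (Af (u + h) - Af u))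
      (𝓝[{h : ℝ | h ≠ 0 ∧ u + h ∈ J}] 0) (𝓝 (A'f u)))
    (hInt2 : IntegrableOn (fun u => Γ s u (A u (Af u))) (Set.Icc s t))
    (hInt3 : IntegrableOn (fun u => ∫ r in s..u, Γ s r (A r (A'f u))) (Set.Icc s t)) :
    Γ s t (ι f) = ι f + (∫ u in s..t, A u f) +
      (∫ u in s..t, (t - u) • Γ s u (A u (Af u))) +
      ∫ u in s..t, (t - u) • ∫ r in s..u, Γ s r (A r (A'f u)) :=
  stmt_6_general ι J hJ Γ hId A htDeriv hIntReg s t hsJ htJ hst f Af hAf A'f hA'f hInt2 hInt3
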